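/- Let nu and nu' be probability measures on (X,𝒳), Q a Markov kernel, g: X × Y → [0,∞) measurable, and y_0,...,y_n in Y. For A in 𝒳 define phi_{nu,n}(A) = E_nu^Q[prod_{i=0}^n g(X_i,y_i) 1_A(X_n)] / E_nu^Q[prod_{i=0}^n g(X_i,y_i)] (assuming the denominators are positive and finite). Then phi_{nu,n}(A) - phi_{nu',n}(A) = E^{Q̄}_{nu⊗nu'}[ prod_{i=0}^n g(X_i,y_i)g(X'_i,y_i) (1_A(X_n) - 1_A(X'_n)) ] / ( E_nu^Q[prod_{i=0}^n g(X_i,y_i)] * E_{nu'}^Q[prod_{i=0}^n g(X_i,y_i)] ), where (X_k, X'_k) is the product chain with kernel Q̄ = Q ⊗ Q started from nu ⊗ nu'. -/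

import Mathlib

/-!
Both filter functionals are integrals of the unnormalized functional `chainFun`. For the product
chain this functional factorizes, by induction on `n` and Fubini for the product of the two
one-step kernels, into the product of the functionals of the two coordinate chains; integrating
against `ν ⊗ ν'` turns the two numerators on the right into cross products of the numerators and
denominators on the left, and the identity becomes `a / b - c / d = (a d - b c) / (b d)`.
-/

open MeasureTheory ProbabilityTheory
open scoped ENNReal

/-- `chainFun Q g f n y x` is the unnormalized functional
`E_x^Q [∏_{i=0}^n g(X_i, y_i) f(X_n)]` of the Markov chain with kernel `Q`
started at `x`, likelihood `g`, observations `y` and terminal function `f`. -/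
noncomputable def chainFun {X Y : Type*} [MeasurableSpace X]
    (Q : Kernel X X) (g : X → Y → ℝ≥0∞) (f : X → ℝ≥0∞) :
    ℕ → (ℕ → Y) → X → ℝ≥0∞
  | 0, y, x => g x (y 0) * f x
  | (n + 1), y, x =>
      g x (y 0) * ∫⁻ x', chainFun Q g f n (fun k => y (k + 1)) x' ∂(Q x)

theorem measurable_chainFun {X Y : Type*} [MeasurableSpace X]
    (Q : Kernel X X) [IsSFiniteKernel Q]
    {g : X → Y → ℝ≥0∞} (hg : ∀ y, Measurable (fun x => g x y))
    {f : X → ℝ≥0∞} (hf : Measurable f) (n : ℕ) (y : ℕ → Y) :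
    Measurable (chainFun Q g f n y) := by
  induction n generalizing y with
  | zero => exact (hg (y 0)).mul hf
  | succ n ih =>
    exact (hg (y 0)).mul (Measurable.lintegral_kernel_prod_right ((ih _).comp measurable_snd))

section Product

variable {X X' Y : Type*} [MeasurableSpace X] [MeasurableSpace X']
  {Q : Kernel X X} [IsSFiniteKernel Q] {Q' : Kernel X' X'} [IsSFiniteKernel Q']
  {g : X → Y → ℝ≥0∞} {g' : X' → Y → ℝ≥0∞}
  (hg : ∀ y, Measurable (fun x => g x y)) (hg' : ∀ y, Measurable (fun x => g' x y))
  {Qbar : Kernel (X × X') (X × X')} (hQbar : ∀ p, Qbar p = (Q p.1).prod (Q' p.2))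
  {gbar : X × X' → Y → ℝ≥0∞} (hgbar : ∀ p y, gbar p y = g p.1 y * g' p.2 y)
  {f : X → ℝ≥0∞} {f' : X' → ℝ≥0∞} (hf : Measurable f) (hf' : Measurable f')
include hg hg' hQbar hgbar hf hf'

theorem chainFun_prod_mul (n : ℕ) (y : ℕ → Y) (p : X × X') :
    chainFun Qbar gbar (fun q => f q.1 * f' q.2) n y p =
      chainFun Q g f n y p.1 * chainFun Q' g' f' n y p.2 := by
  induction n generalizing y p with
  | zero =>
    simp only [chainFun, hgbar]
    ring
  | succ n ih =>
    simp only [chainFun, hgbar, hQbar, ih]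
    rw [lintegral_prod_mul (measurable_chainFun Q hg hf n _).aemeasurable
      (measurable_chainFun Q' hg' hf' n _).aemeasurable]
    ring

theorem lintegral_chainFun_prod_mul (ν : Measure X) (ν' : Measure X') [SFinite ν']
    (n : ℕ) (y : ℕ → Y) :
    ∫⁻ p, chainFun Qbar gbar (fun q => f q.1 * f' q.2) n y p ∂(ν.prod ν') =
      (∫⁻ x, chainFun Q g f n y x ∂ν) * ∫⁻ x, chainFun Q' g' f' n y x ∂ν' := by
  simp only [chainFun_prod_mul hg hg' hQbar hgbar hf hf']
  exact lintegral_prod_mul (measurable_chainFun Q hg hf n y).aemeasurable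
    (measurable_chainFun Q' hg' hf' n y).aemeasurable

end Product

theorem stmt5_general {X Y : Type*} [MeasurableSpace X]
    (Q : Kernel X X) [IsMarkovKernel Q]
    (g : X → Y → ℝ≥0∞) (hg : ∀ y, Measurable (fun x => g x y))
    (ν ν' : Measure X) [IsProbabilityMeasure ν']
    (y : ℕ → Y) (n : ℕ) (A : Set X) (hA : MeasurableSet A)
    -- the product kernel Q̄((x,x'), ·) = Q(x, ·) ⊗ Q(x', ·)
    (Qbar : Kernel (X × X) (X × X))
    (hQbar : ∀ p : X × X, Qbar p = (Q p.1).prod (Q p.2))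
    -- the product likelihood ḡ((x,x'), y) = g(x,y) g(x',y)
    (gbar : X × X → Y → ℝ≥0∞)
    (hgbar : ∀ p y', gbar p y' = g p.1 y' * g p.2 y')
    -- positivity and finiteness of the denominators
    (h0 : 0 < ∫⁻ x, chainFun Q g (fun _ => 1) n y x ∂ν)
    (h0' : 0 < ∫⁻ x, chainFun Q g (fun _ => 1) n y x ∂ν')
    (hfin : ∫⁻ x, chainFun Q g (fun _ => 1) n y x ∂ν < ⊤)
    (hfin' : ∫⁻ x, chainFun Q g (fun _ => 1) n y x ∂ν' < ⊤) :
    (∫⁻ x, chainFun Q g (A.indicator 1) n y x ∂ν).toReal /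
        (∫⁻ x, chainFun Q g (fun _ => 1) n y x ∂ν).toReal -
      (∫⁻ x, chainFun Q g (A.indicator 1) n y x ∂ν').toReal /
        (∫⁻ x, chainFun Q g (fun _ => 1) n y x ∂ν').toReal =
      ((∫⁻ p, chainFun Qbar gbar (fun p => A.indicator 1 p.1) n y p ∂(ν.prod ν')).toReal -
          (∫⁻ p, chainFun Qbar gbar (fun p => A.indicator 1 p.2) n y p ∂(ν.prod ν')).toReal) /
        ((∫⁻ x, chainFun Q g (fun _ => 1) n y x ∂ν).toReal *
          (∫⁻ x, chainFun Q g (fun _ => 1) n y x ∂ν').toReal) := by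
  have hind : Measurable (A.indicator (1 : X → ℝ≥0∞)) := measurable_const.indicator hA
  have hone : Measurable (fun _ : X => (1 : ℝ≥0∞)) := measurable_const
  have first := lintegral_chainFun_prod_mul hg hg hQbar hgbar hind hone ν ν' n y
  have second := lintegral_chainFun_prod_mul hg hg hQbar hgbar hone hind ν ν' n y
  simp only [mul_one, one_mul] at first second
  rw [first, second, ENNReal.toReal_mul, ENNReal.toReal_mul,
    div_sub_div _ _ (ENNReal.toReal_pos h0.ne' hfin.ne).ne' (ENNReal.toReal_pos h0'.ne' hfin'.ne).ne']

/-- Equation (13): the difference of the filtering distributions started from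
`ν` and `ν'` equals the tensorized expression for the product chain with
kernel `Q̄ = Q ⊗ Q` started from `ν ⊗ ν'`. -/
theorem stmt5 {X Y : Type*} [MeasurableSpace X]
    (Q : Kernel X X) [IsMarkovKernel Q]
    (g : X → Y → ℝ≥0∞) (hg : ∀ y, Measurable (fun x => g x y))
    (ν ν' : Measure X) [IsProbabilityMeasure ν] [IsProbabilityMeasure ν']
    (y : ℕ → Y) (n : ℕ) (A : Set X) (hA : MeasurableSet A)
    -- the product kernel Q̄((x,x'), ·) = Q(x, ·) ⊗ Q(x', ·)
    (Qbar : Kernel (X × X) (X × X))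
    (hQbar : ∀ p : X × X, Qbar p = (Q p.1).prod (Q p.2))
    -- the product likelihood ḡ((x,x'), y) = g(x,y) g(x',y)
    (gbar : X × X → Y → ℝ≥0∞)
    (hgbar : ∀ p y', gbar p y' = g p.1 y' * g p.2 y')
    -- positivity and finiteness of the denominators
    (h0 : 0 < ∫⁻ x, chainFun Q g (fun _ => 1) n y x ∂ν)
    (h0' : 0 < ∫⁻ x, chainFun Q g (fun _ => 1) n y x ∂ν')
    (hfin : ∫⁻ x, chainFun Q g (fun _ => 1) n y x ∂ν < ⊤)
    (hfin' : ∫⁻ x, chainFun Q g (fun _ => 1) n y x ∂ν' < ⊤) :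
    (∫⁻ x, chainFun Q g (A.indicator 1) n y x ∂ν).toReal /
        (∫⁻ x, chainFun Q g (fun _ => 1) n y x ∂ν).toReal -
      (∫⁻ x, chainFun Q g (A.indicator 1) n y x ∂ν').toReal /
        (∫⁻ x, chainFun Q g (fun _ => 1) n y x ∂ν').toReal =
      ((∫⁻ p, chainFun Qbar gbar (fun p => A.indicator 1 p.1) n y p ∂(ν.prod ν')).toReal -
          (∫⁻ p, chainFun Qbar gbar (fun p => A.indicator 1 p.2) n y p ∂(ν.prod ν')).toReal) /
        ((∫⁻ x, chainFun Q g (fun _ => 1) n y x ∂ν).toReal *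
          (∫⁻ x, chainFun Q g (fun _ => 1) n y x ∂ν').toReal) :=
  stmt5_general Q g hg ν ν' y n A hA Qbar hQbar gbar hgbar h0 h0' hfin hfin'
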